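/- Let k, n ∈ ℕ with 1 ≤ k < n and let T be the set of finite words over {v₁,…,v_k} in which each vᵢ (1 ≤ i ≤ k) occurs at least once; T is a semigroup under concatenation. For w ∈ Sₙ, let τ(w) ∈ T be the word obtained from w by deleting all occurrences of letters of A and all occurrences of vᵢ for k < i ≤ n. Let ⟨y_t⟩_{t=1}^∞ be a sequence in T and let D ⊆ S₀ be a J-set in the semigroup S₀. Then there exists a sequence ⟨wₘ⟩_{m=1}^∞ of n-variable words over A such that {wₘ(ā) : ā ∈ Aₘⁿ} ⊆ D for every m ∈ ℕ, and for every finite nonempty G = {m₁ < m₂ < … < m_l} ⊆ ℕ, the product τ(w_{m₁})·τ(w_{m₂})·…·τ(w_{m_l}) belongs to FP(⟨y_t⟩_{t=1}^∞). -/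

import Mathlib

open scoped BigOperators

attribute [local instance] Ultrafilter.mul Ultrafilter.semigroup

namespace InfHJ

variable {α : Type*}

/-- The union alphabet `A = ⋃ᵢ Aᵢ`. -/
def bigA (𝒜 : ℕ → Set α) : Set α := ⋃ i, 𝒜 i

/-- `S₀`: the set of nonempty finite words all of whose letters come from `A`
(viewed inside the free monoid on `α ⊕ Fin n`, letters `Sum.inl a`, variables `Sum.inr i`). -/
def S0 (𝒜 : ℕ → Set α) (n : ℕ) : Set (FreeMonoid (α ⊕ Fin n)) :=
  {w | FreeMonoid.toList w ≠ [] ∧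
    ∀ x ∈ FreeMonoid.toList w, ∃ a ∈ bigA 𝒜, x = Sum.inl a}

/-- `Sₙ`: the set of `n`-variable words over `A`: every letter is in `A` and
every variable `vᵢ` (`i : Fin n`) occurs at least once. -/
def SV (𝒜 : ℕ → Set α) (n : ℕ) : Set (FreeMonoid (α ⊕ Fin n)) :=
  {w | (∀ x ∈ FreeMonoid.toList w, ∀ a : α, x = Sum.inl a → a ∈ bigA 𝒜) ∧
    ∀ i : Fin n, Sum.inr i ∈ FreeMonoid.toList w}

/-- Substitution `w(x⃗)`: replace every occurrence of the variable `vᵢ` by the letter `xᵢ`. -/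
def subst {n : ℕ} (w : FreeMonoid (α ⊕ Fin n)) (x : Fin n → α) :
    FreeMonoid (α ⊕ Fin n) :=
  FreeMonoid.map (Sum.elim Sum.inl fun i => Sum.inl (x i)) w

/-- The tuples `ā ∈ Aₘⁿ`. -/
def tuples (𝒜 : ℕ → Set α) (m n : ℕ) : Set (Fin n → α) := {a | ∀ j, a j ∈ 𝒜 m}

/-- `D` is a J-set in the (sub)semigroup `S` of the monoid `M`: for every finite set `F` of
sequences in `S` there are `m ≥ 1`, `a₁,…,a_{m+1} ∈ S` and `t₁ < … < t_m` such that
`a₁ f(t₁) a₂ f(t₂) ⋯ a_m f(t_m) a_{m+1} ∈ D` for every `f ∈ F`. -/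
def IsJSetIn {M : Type*} [Monoid M] (S D : Set M) : Prop :=
  ∀ F : Finset (ℕ → M), (∀ f ∈ F, ∀ t, f t ∈ S) →
    ∃ m : ℕ, 1 ≤ m ∧ ∃ a : Fin (m + 1) → M, (∀ i, a i ∈ S) ∧
      ∃ t : Fin m → ℕ, StrictMono t ∧ ∀ f ∈ F,
        (List.ofFn fun i : Fin m => a i.castSucc * f (t i)).prod * a (Fin.last m) ∈ D

/-- `D` is piecewise syndetic in the (sub)semigroup `S` of the monoid `M`: there is a finite
`F ⊆ S` such that for every finite `E ⊆ S` there is `x ∈ S` with `E·x ⊆ ⋃_{t ∈ F} t⁻¹D`. -/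
def IsPWSIn {M : Type*} [Monoid M] (S D : Set M) : Prop :=
  ∃ F : Finset M, ↑F ⊆ S ∧
    ∀ E : Finset M, ↑E ⊆ S → ∃ x ∈ S, ∀ e ∈ E, ∃ t ∈ F, t * (e * x) ∈ D

/-- A (two-sided) ideal of the subsemigroup `B`. -/
def IsIdealIn {T : Type*} [Mul T] (B I : Set T) : Prop :=
  I.Nonempty ∧ I ⊆ B ∧ ∀ x ∈ I, ∀ t ∈ B, t * x ∈ I ∧ x * t ∈ I

/-- `K` is the smallest (two-sided) ideal of the subsemigroup `B`. -/
def IsSmallestIdealIn {T : Type*} [Mul T] (B K : Set T) : Prop :=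
  IsIdealIn B K ∧ ∀ I, IsIdealIn B I → K ⊆ I

/-- `D` is central in the (sub)semigroup `S` of the semigroup `M`: `D` belongs to some
idempotent ultrafilter lying in the smallest two-sided ideal of
`βS = {q : Ultrafilter M | S ∈ q}`. -/
def IsCentralIn {M : Type*} [Semigroup M] (S D : Set M) : Prop :=
  ∃ p : Ultrafilter M, S ∈ p ∧ p * p = p ∧
    (∃ K : Set (Ultrafilter M), IsSmallestIdealIn {q : Ultrafilter M | S ∈ q} K ∧ p ∈ K) ∧
    D ∈ p

/-- `D` is a C-set in the (sub)semigroup `S` of the monoid `M`: `D` belongs to some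
idempotent ultrafilter on `S` all of whose members are J-sets in `S`. -/
def IsCSetIn {M : Type*} [Monoid M] (S D : Set M) : Prop :=
  ∃ p : Ultrafilter M, S ∈ p ∧ p * p = p ∧
    (∀ B ∈ p, IsJSetIn S (B ∩ S)) ∧ D ∈ p

/-- `FS(⟨xₙ⟩)` in a commutative additive monoid: all finite sums over nonempty finite index sets. -/
def FSset {T : Type*} [AddCommMonoid T] (x : ℕ → T) : Set T :=
  {s | ∃ H : Finset ℕ, H.Nonempty ∧ s = ∑ n ∈ H, x n}

/-- `FP(⟨y_t⟩)` in a (not necessarily commutative) monoid: all products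
`y_{t₁} ⋯ y_{t_l}` with `t₁ < … < t_l`, taken in increasing order of indices. -/
def FPset {T : Type*} [Monoid T] (y : ℕ → T) : Set T :=
  {u | ∃ G : Finset ℕ, G.Nonempty ∧ u = ((G.sort (· ≤ ·)).map y).prod}

/-- `C` is an IP set in the commutative monoid `T`. -/
def IsIPSet {T : Type*} [AddCommMonoid T] (C : Set T) : Prop :=
  ∃ x : ℕ → T, FSset x ⊆ C

/-- `τ(w) = |w|_{v}`: the number of occurrences of variables in `w`
(for one-variable words this is the number of occurrences of `v₁`). -/
def tauCount {n : ℕ} (w : FreeMonoid (α ⊕ Fin n)) : ℕ :=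
  (FreeMonoid.toList w).countP Sum.isRight

/-- `T`: the words over `{v₁,…,v_k}` in which every `vᵢ` occurs. -/
def Tfull (k : ℕ) : Set (FreeMonoid (Fin k)) :=
  {u | FreeMonoid.toList u ≠ [] ∧ ∀ i : Fin k, i ∈ FreeMonoid.toList u}

/-- `τ(w)`: delete from `w` all letters of `A` and all variables `vᵢ` with `i ≥ k`,
leaving a word over `{v₁,…,v_k}`. -/
def tauDel {n : ℕ} (k : ℕ) (w : FreeMonoid (α ⊕ Fin n)) : FreeMonoid (Fin k) :=
  FreeMonoid.ofList <| (FreeMonoid.toList w).filterMap fun x =>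
    match x with
    | Sum.inl _ => none
    | Sum.inr i => if h : (i : ℕ) < k then some ⟨i, h⟩ else none

section Aux
variable {n k : ℕ}

lemma tauDel_mul (w₁ w₂ : FreeMonoid (α ⊕ Fin n)) :
    tauDel k (w₁ * w₂) = tauDel k w₁ * tauDel k w₂ := by
  simp only [tauDel, FreeMonoid.toList_mul, List.filterMap_append, FreeMonoid.ofList_append]

def tauHom (α : Type*) (n k : ℕ) : FreeMonoid (α ⊕ Fin n) →* FreeMonoid (Fin k) where
  toFun := tauDel k
  map_one' := rfl
  map_mul' := tauDel_mul

lemma tauDel_prod (l : List (FreeMonoid (α ⊕ Fin n))) :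
    tauDel k l.prod = (l.map (tauDel k)).prod :=
  map_list_prod (tauHom α n k) l

lemma tauDel_eq_one_of_inl (w : FreeMonoid (α ⊕ Fin n))
    (h : ∀ x ∈ FreeMonoid.toList w, ∃ a : α, x = Sum.inl a) :
    tauDel (n := n) k w = 1 := by
  have : (FreeMonoid.toList w).filterMap (fun x =>
      match x with
      | Sum.inl _ => none
      | Sum.inr i => if h : (i : ℕ) < k then some (⟨i, h⟩ : Fin k) else none) = [] := by
    rw [List.filterMap_eq_nil_iff]
    intro x hx
    obtain ⟨a, rfl⟩ := h x hx
    rfl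
  rw [tauDel, this]; rfl

def liftVar (α : Type*) {k n : ℕ} (h : k ≤ n) : FreeMonoid (Fin k) →* FreeMonoid (α ⊕ Fin n) :=
  FreeMonoid.map (fun i => Sum.inr (Fin.castLE h i))

lemma toList_liftVar (h : k ≤ n) (u : FreeMonoid (Fin k)) :
    FreeMonoid.toList (liftVar α h u) =
      (FreeMonoid.toList u).map (fun i => Sum.inr (Fin.castLE h i)) :=
  FreeMonoid.toList_map _ _

lemma tauDel_liftVar (h : k ≤ n) (u : FreeMonoid (Fin k)) :
    tauDel (α := α) k (liftVar α h u) = u := by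
  rw [tauDel, toList_liftVar, List.filterMap_map]
  have : ∀ l : List (Fin k), l.filterMap ((fun x =>
      match x with
      | Sum.inl _ => none
      | Sum.inr i => if h : (i : ℕ) < k then some (⟨i, h⟩ : Fin k) else none) ∘
        (fun i => (Sum.inr (Fin.castLE h i) : α ⊕ Fin n))) = l := by
    intro l
    induction l with
    | nil => rfl
    | cons x l ih =>
      rw [List.filterMap_cons]
      simp only [Function.comp_apply]
      simp only [Function.comp_def] at ih
      rw [ih, dif_pos (show ((Fin.castLE h x : Fin n) : ℕ) < k from x.isLt)]
      congr 1
  rw [this, FreeMonoid.ofList_toList]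

def tailWord (α : Type*) (k n : ℕ) : FreeMonoid (α ⊕ Fin n) :=
  FreeMonoid.ofList (((List.finRange n).filter (fun i : Fin n => decide (k ≤ i.val))).map Sum.inr)

lemma mem_toList_tailWord (x : α ⊕ Fin n) :
    x ∈ FreeMonoid.toList (tailWord α k n) ↔ ∃ i : Fin n, k ≤ (i : ℕ) ∧ x = Sum.inr i := by
  simp [tailWord, eq_comm]

lemma tauDel_tailWord : tauDel k (tailWord α k n) = 1 := by
  have : (FreeMonoid.toList (tailWord α k n)).filterMap (fun x =>
      match x with
      | Sum.inl _ => none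
      | Sum.inr i => if h : (i : ℕ) < k then some (⟨i, h⟩ : Fin k) else none) = [] := by
    rw [List.filterMap_eq_nil_iff]
    intro x hx
    obtain ⟨i, hi, rfl⟩ := (mem_toList_tailWord x).1 hx
    simp [Nat.not_lt.mpr hi]
  rw [tauDel, this]; rfl

lemma mem_toList_prod {β : Type*} (l : List (FreeMonoid β)) (x : β) :
    x ∈ FreeMonoid.toList l.prod ↔ ∃ w ∈ l, x ∈ FreeMonoid.toList w := by
  simp [FreeMonoid.toList_prod, List.mem_flatten]

lemma le_foldr_max (l : List ℕ) (j : ℕ) (hj : j ∈ l) : j ≤ l.foldr max 0 := by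
  induction l with
  | nil => cases hj
  | cons x l ih =>
    rcases List.mem_cons.1 hj with rfl | h
    · exact le_max_left _ _
    · exact le_trans (ih h) (le_max_right _ _)

lemma subst_mul (w₁ w₂ : FreeMonoid (α ⊕ Fin n)) (a : Fin n → α) :
    subst (w₁ * w₂) a = subst w₁ a * subst w₂ a :=
  map_mul (FreeMonoid.map _) _ _

lemma subst_prod (l : List (FreeMonoid (α ⊕ Fin n))) (a : Fin n → α) :
    subst l.prod a = (l.map (subst · a)).prod :=
  map_list_prod (FreeMonoid.map _) l

lemma toList_subst (w : FreeMonoid (α ⊕ Fin n)) (a : Fin n → α) :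
    FreeMonoid.toList (subst w a) =
      (FreeMonoid.toList w).map (Sum.elim Sum.inl fun i => Sum.inl (a i)) :=
  FreeMonoid.toList_map _ _

lemma subst_eq_self (w : FreeMonoid (α ⊕ Fin n)) (a : Fin n → α)
    (h : ∀ x ∈ FreeMonoid.toList w, ∃ b : α, x = Sum.inl b) : subst w a = w := by
  apply FreeMonoid.toList.injective
  rw [toList_subst]
  conv_rhs => rw [← List.map_id (FreeMonoid.toList w)]
  apply List.map_congr_left
  intro x hx
  obtain ⟨b, rfl⟩ := h x hx
  rfl

theorem step (𝒜 : ℕ → Set α) (hfin : ∀ i, (𝒜 i).Finite)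
    {k n : ℕ} (hkn : k < n)
    (y : ℕ → FreeMonoid (Fin k)) (hy : ∀ t, y t ∈ Tfull k)
    (D : Set (FreeMonoid (α ⊕ Fin n)))
    (hJ : IsJSetIn (S0 𝒜 n) D) (m o : ℕ) :
    ∃ (W : FreeMonoid (α ⊕ Fin n)) (L : List ℕ),
      W ∈ SV 𝒜 n ∧ (∀ a ∈ tuples 𝒜 m n, subst W a ∈ D) ∧
      L ≠ [] ∧ L.Pairwise (· < ·) ∧ (∀ j ∈ L, o ≤ j) ∧
      tauDel k W = (L.map y).prod := by
  classical
  set g : ℕ → FreeMonoid (α ⊕ Fin n) :=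
    fun t => liftVar α hkn.le (y (o + t)) * tailWord α k n with hg
  have hgletters : ∀ t, ∀ x ∈ FreeMonoid.toList (g t), ∃ i : Fin n, x = Sum.inr i := by
    intro t x hx
    rw [hg] at hx
    rw [FreeMonoid.toList_mul, List.mem_append] at hx
    rcases hx with hx | hx
    · rw [toList_liftVar] at hx
      obtain ⟨i, _, rfl⟩ := List.mem_map.1 hx
      exact ⟨_, rfl⟩
    · obtain ⟨i, _, rfl⟩ := (mem_toList_tailWord x).1 hx
      exact ⟨_, rfl⟩
  have htail_ne : FreeMonoid.toList (tailWord α k n) ≠ [] := by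
    intro hnil
    have : (Sum.inr ⟨k, hkn⟩ : α ⊕ Fin n) ∈ FreeMonoid.toList (tailWord α k n) :=
      (mem_toList_tailWord _).2 ⟨⟨k, hkn⟩, le_refl k, rfl⟩
    rw [hnil] at this; exact List.not_mem_nil this
  have hgne : ∀ t, FreeMonoid.toList (g t) ≠ [] := by
    intro t hnil
    rw [hg, FreeMonoid.toList_mul, List.append_eq_nil_iff] at hnil
    exact htail_ne hnil.2
  set At : Finset (Fin n → α) := Fintype.piFinset (fun _ => (hfin m).toFinset) with hAtdef
  have hAt : ∀ a, a ∈ At ↔ a ∈ tuples 𝒜 m n := by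
    intro a
    simp [hAtdef, Fintype.mem_piFinset, Set.Finite.mem_toFinset, tuples]
  set F : Finset (ℕ → FreeMonoid (α ⊕ Fin n)) := At.image (fun a t => subst (g t) a) with hF
  have hFS : ∀ f ∈ F, ∀ t, f t ∈ S0 𝒜 n := by
    intro f hf t
    rw [hF, Finset.mem_image] at hf
    obtain ⟨a, ha, rfl⟩ := hf
    constructor
    · rw [toList_subst]
      simpa using hgne t
    · intro x hx
      rw [toList_subst] at hx
      obtain ⟨z, hz, rfl⟩ := List.mem_map.1 hx
      obtain ⟨i, rfl⟩ := hgletters t z hz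
      refine ⟨a i, Set.mem_iUnion.2 ⟨m, ((hAt a).1 ha) i⟩, rfl⟩
  obtain ⟨m', hm', a, haS, t, ht, hprod⟩ := hJ F hFS
  refine ⟨(List.ofFn fun i : Fin m' => a i.castSucc * g (t i)).prod * a (Fin.last m'),
    List.ofFn (fun i : Fin m' => o + t i), ?_, ?_, ?_, ?_, ?_, ?_⟩
  · constructor
    · intro x hx b hxb
      rw [FreeMonoid.toList_mul, List.mem_append] at hx
      rcases hx with hx | hx
      · rw [mem_toList_prod] at hx
        obtain ⟨w, hw, hxw⟩ := hx
        obtain ⟨i, rfl⟩ := List.mem_ofFn.1 hw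
        rw [FreeMonoid.toList_mul, List.mem_append] at hxw
        rcases hxw with hxw | hxw
        · obtain ⟨b', hb', hxb'⟩ := (haS i.castSucc).2 x hxw
          rw [hxb] at hxb'
          exact (Sum.inl.injEq _ _ ▸ hxb' : b = b') ▸ hb'
        · obtain ⟨i', hi'⟩ := hgletters (t i) x hxw
          rw [hxb] at hi'; exact absurd hi' (by simp)
      · obtain ⟨b', hb', hxb'⟩ := (haS (Fin.last m')).2 x hx
        rw [hxb] at hxb'
        exact (Sum.inl.injEq _ _ ▸ hxb' : b = b') ▸ hb'
    · intro i
      have h0 : (⟨0, hm'⟩ : Fin m') = ⟨0, hm'⟩ := rfl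
      have hmem : Sum.inr i ∈ FreeMonoid.toList (g (t ⟨0, hm'⟩)) := by
        rw [hg, FreeMonoid.toList_mul, List.mem_append]
        by_cases hik : (i : ℕ) < k
        · left
          rw [toList_liftVar, List.mem_map]
          exact ⟨⟨i, hik⟩, (hy (o + t ⟨0, hm'⟩)).2 _, rfl⟩
        · right
          exact (mem_toList_tailWord _).2 ⟨i, Nat.not_lt.1 hik, rfl⟩
      rw [FreeMonoid.toList_mul, List.mem_append]
      left
      rw [mem_toList_prod]
      refine ⟨a (⟨0, hm'⟩ : Fin m').castSucc * g (t ⟨0, hm'⟩),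
        List.mem_ofFn.2 ⟨⟨0, hm'⟩, rfl⟩, ?_⟩
      rw [FreeMonoid.toList_mul, List.mem_append]
      exact Or.inr hmem
  · intro a' ha'
    have hfF : (fun t => subst (g t) a') ∈ F := by
      rw [hF, Finset.mem_image]
      exact ⟨a', (hAt a').2 ha', rfl⟩
    have := hprod _ hfF
    have heq : subst ((List.ofFn fun i : Fin m' => a i.castSucc * g (t i)).prod *
        a (Fin.last m')) a' =
        (List.ofFn fun i : Fin m' => a i.castSucc * subst (g (t i)) a').prod *
          a (Fin.last m') := by
      rw [subst_mul, subst_prod, List.map_ofFn]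
      rw [subst_eq_self (a (Fin.last m')) a' (fun x hx => by
        obtain ⟨b, _, h⟩ := (haS (Fin.last m')).2 x hx; exact ⟨b, h⟩)]
      have hfun : ((fun x => subst x a') ∘ fun i : Fin m' => a i.castSucc * g (t i)) =
          fun i : Fin m' => a i.castSucc * subst (g (t i)) a' := by
        funext i
        simp only [Function.comp_apply]
        rw [subst_mul, subst_eq_self (a i.castSucc) a' (fun x hx => by
          obtain ⟨b, _, h⟩ := (haS i.castSucc).2 x hx; exact ⟨b, h⟩)]
      rw [hfun]
    rw [heq]
    exact this
  · simp only [ne_eq, List.ofFn_eq_nil_iff]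
    omega
  · rw [List.pairwise_ofFn]
    intro i j hij
    exact Nat.add_lt_add_left (ht hij) o
  · intro j hj
    obtain ⟨i, rfl⟩ := List.mem_ofFn.1 hj
    exact Nat.le_add_right o _
  · rw [tauDel_mul, tauDel_prod, List.map_ofFn, List.map_ofFn]
    rw [tauDel_eq_one_of_inl (a (Fin.last m')) (fun x hx => by
      obtain ⟨b, _, h⟩ := (haS (Fin.last m')).2 x hx; exact ⟨b, h⟩)]
    rw [mul_one]
    have hfun : (tauDel (n := n) k ∘ fun i : Fin m' => a i.castSucc * g (t i)) =
        (y ∘ fun i : Fin m' => o + t i) := by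
      funext i
      simp only [Function.comp_apply]
      rw [hg]
      rw [tauDel_mul, tauDel_mul, tauDel_liftVar, tauDel_tailWord, mul_one]
      rw [tauDel_eq_one_of_inl (a i.castSucc) (fun x hx => by
        obtain ⟨b, _, h⟩ := (haS i.castSucc).2 x hx; exact ⟨b, h⟩)]
      rw [one_mul]
    rw [hfun]


end Aux

theorem statement6 (𝒜 : ℕ → Set α) (hmono : Monotone 𝒜)
    (hfin : ∀ i, (𝒜 i).Finite) (hne : ∀ i, (𝒜 i).Nonempty)
    (k n : ℕ) (hk : 1 ≤ k) (hkn : k < n)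
    (y : ℕ → FreeMonoid (Fin k)) (hy : ∀ t, y t ∈ Tfull k)
    (D : Set (FreeMonoid (α ⊕ Fin n))) (hD : D ⊆ S0 𝒜 n)
    (hJ : IsJSetIn (S0 𝒜 n) D) :
    ∃ w : ℕ → FreeMonoid (α ⊕ Fin n), (∀ i, w i ∈ SV 𝒜 n) ∧
      (∀ m : ℕ, ∀ a ∈ tuples 𝒜 m n, subst (w m) a ∈ D) ∧
      ∀ l : ℕ, 1 ≤ l → ∀ ms : Fin l → ℕ, StrictMono ms →
        (List.ofFn fun i : Fin l => tauDel k (w (ms i))).prod ∈ FPset y := by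
  classical
  have key := step 𝒜 hfin hkn y hy D hJ
  choose W L hSV hDmem hLne hLsort hLlo htau using key
  let o : ℕ → ℕ := fun m => Nat.rec 0 (fun m' prev => (L m' prev).foldr max 0 + 1) m
  have ho_succ : ∀ m, o (m + 1) = (L m (o m)).foldr max 0 + 1 := fun m => rfl
  set w : ℕ → FreeMonoid (α ⊕ Fin n) := fun m => W m (o m) with hw
  set Lm : ℕ → List ℕ := fun m => L m (o m) with hLm
  have hblock : ∀ m, ∀ j ∈ Lm m, j < o (m + 1) := by
    intro m j hj
    rw [ho_succ]
    exact Nat.lt_succ_of_le (le_foldr_max _ _ hj)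
  have ho_lt : ∀ m, o m < o (m + 1) := by
    intro m
    obtain ⟨j, hj⟩ := List.exists_mem_of_ne_nil _ (hLne m (o m))
    exact lt_of_le_of_lt (hLlo m (o m) j hj) (hblock m j hj)
  have ho_mono : Monotone o := monotone_nat_of_le_succ (fun m => (ho_lt m).le)
  have hcross : ∀ m m', m < m' → ∀ x ∈ Lm m, ∀ z ∈ Lm m', x < z := by
    intro m m' h x hx z hz
    exact lt_of_lt_of_le (hblock m x hx)
      (le_trans (ho_mono h) (hLlo m' (o m') z hz))
  refine ⟨w, fun i => hSV i (o i), fun m a ha => hDmem m (o m) a ha, ?_⟩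
  intro l hl ms hms
  set J : List ℕ := (List.ofFn fun i : Fin l => Lm (ms i)).flatten with hJdef
  have hJsorted : J.Pairwise (· < ·) := by
    rw [hJdef, List.pairwise_flatten]
    constructor
    · intro l' hl'
      obtain ⟨i, rfl⟩ := List.mem_ofFn.1 hl'
      exact hLsort _ _
    · rw [List.pairwise_ofFn]
      intro i j hij
      exact hcross _ _ (hms hij)
  have hJnodup : J.Nodup := hJsorted.nodup
  have hJne : J ≠ [] := by
    intro hnil
    obtain ⟨j, hj⟩ := List.exists_mem_of_ne_nil _ (hLne (ms ⟨0, hl⟩) (o (ms ⟨0, hl⟩)))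
    have : j ∈ J := by
      rw [hJdef, List.mem_flatten]
      exact ⟨Lm (ms ⟨0, hl⟩), List.mem_ofFn.2 ⟨⟨0, hl⟩, rfl⟩, hj⟩
    rw [hnil] at this
    exact List.not_mem_nil this
  have hsort : J.toFinset.sort (· ≤ ·) = J :=
    (List.toFinset_sort (· ≤ ·) hJnodup).2 (hJsorted.imp le_of_lt)
  refine ⟨J.toFinset, ?_, ?_⟩
  · obtain ⟨j, hj⟩ := List.exists_mem_of_ne_nil _ hJne
    exact ⟨j, List.mem_toFinset.2 hj⟩
  · rw [hsort]
    have hfun : (fun i : Fin l => tauDel k (w (ms i))) =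
        fun i : Fin l => ((Lm (ms i)).map y).prod := by
      funext i
      exact htau (ms i) (o (ms i))
    rw [hfun, hJdef, List.map_flatten, List.prod_flatten, List.map_ofFn, List.map_ofFn]
    rfl


end InfHJ
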